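/- arXiv:0804.3825 — 2 statements merged into one kernel-verified Lean document; each statement's English description precedes it below -/
import Mathlib

section
/- Let f(η) = h(η/2) − h((1−η)/2) and define g : [0,1] → ℝ by g(η) = f(η) for 0 ≤ η ≤ 1/5, and g(η) = ((1−η)/(4/5))·f(1/5) + ((η−1/5)/(4/5))·log 2 for 1/5 ≤ η ≤ 1 (the chord from (1/5, f(1/5)) to (1, log 2)). Then g is concave on [0,1] and f(η) ≤ g(η) for all η ∈ [0,1]. -/
open MeasureTheory Real

noncomputable def prob {Ω : Type*} [MeasurableSpace Ω] (μ : Measure Ω) {A : Type*}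
    (X : Ω → A) (a : A) : ℝ :=
  (μ (X ⁻¹' {a})).toReal

noncomputable def entropy {Ω : Type*} [MeasurableSpace Ω] (μ : Measure Ω) {A : Type*}
    [Fintype A] (X : Ω → A) : ℝ :=
  ∑ a, Real.negMulLog (prob μ X a)

noncomputable def mutualInfo {Ω : Type*} [MeasurableSpace Ω] (μ : Measure Ω)
    {A B : Type*} [Fintype A] [Fintype B] (X : Ω → A) (Y : Ω → B) : ℝ :=
  entropy μ X + entropy μ Y - entropy μ (fun ω => (X ω, Y ω))

noncomputable def condMutualInfo {Ω : Type*} [MeasurableSpace Ω] (μ : Measure Ω)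
    {A B C : Type*} [Fintype A] [Fintype B] [Fintype C]
    (X : Ω → A) (Y : Ω → B) (Z : Ω → C) : ℝ :=
  entropy μ (fun ω => (X ω, Z ω)) + entropy μ (fun ω => (Y ω, Z ω))
    - entropy μ (fun ω => (X ω, Y ω, Z ω)) - entropy μ Z

/-- `W` and `Y` are conditionally independent given `X` (Markov chain `W → X → Y`). -/
def CondIndepGiven {Ω : Type*} [MeasurableSpace Ω] (μ : Measure Ω) {A B C : Type*}
    (W : Ω → A) (X : Ω → B) (Y : Ω → C) : Prop :=
  ∀ a b c, prob μ (fun ω => (W ω, X ω, Y ω)) (a, b, c) * prob μ X b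
    = prob μ (fun ω => (W ω, X ω)) (a, b) * prob μ (fun ω => (X ω, Y ω)) (b, c)

noncomputable def bsscK (x y1 y2 : Bool) : ℝ :=
  if x = false then (if y2 = false then 1 / 2 else 0)
  else (if y1 = true then 1 / 2 else 0)

def IsBSSC {Ω : Type*} [MeasurableSpace Ω] (μ : Measure Ω) (X Y1 Y2 : Ω → Bool) : Prop :=
  ∀ x y1 y2, prob μ (fun ω => (X ω, Y1 ω, Y2 ω)) (x, y1, y2) = prob μ X x * bsscK x y1 y2

noncomputable def binH (x : ℝ) : ℝ := Real.negMulLog x + Real.negMulLog (1 - x)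

noncomputable def fskew (η : ℝ) : ℝ := binH (η / 2) - binH ((1 - η) / 2)


/-- The concave envelope: `f` on `[0,1/5]`, followed by the chord from
`(1/5, f(1/5))` to `(1, log 2)`. -/
noncomputable def gskew (η : ℝ) : ℝ :=
  if η ≤ 1 / 5 then fskew η
  else ((1 - η) / (4 / 5)) * fskew (1 / 5) + ((η - 1 / 5) / (4 / 5)) * Real.log 2

/-!
On `(0, 1)`, `f'' η = (2η - 1) / (η (2 - η) (1 - η) (1 + η))`, so `f` is concave on `[0, 1/2]`
and convex on `[1/2, 1]`. The chord from `(1/5, f(1/5))` to `(1, log 2)` is the tangent to `f`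
at `1/5`, so it lies above `f` on `[0, 1/2]` by concavity, and on `[1/2, 1]` by convexity since it
dominates `f` at both ends. Gluing a concave function to an affine one that lies above it and
meets it at the junction gives a concave function, hence `g` is concave.
-/

open Set

lemma ConcaveOn.le_add_mul_sub_of_hasDerivAt {S : Set ℝ} {f : ℝ → ℝ} {f' x y : ℝ}
    (hf : ConcaveOn ℝ S f) (hx : x ∈ S) (hy : y ∈ S) (hd : HasDerivAt f f' x) :
    f y ≤ f x + f' * (y - x) := by
  rcases lt_trichotomy y x with hyx | rfl | hxy
  · have := hf.le_slope_of_hasDerivAt hy hx hyx hd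
    rw [slope_def_field, le_div_iff₀ (sub_pos.2 hyx)] at this
    linarith
  · simp
  · have := hf.slope_le_of_hasDerivAt hx hy hxy hd
    rw [slope_def_field, div_le_iff₀ (sub_pos.2 hxy)] at this
    linarith

lemma ConvexOn.le_affine_of_le_of_le {f : ℝ → ℝ} {a b k m x : ℝ} (hf : ConvexOn ℝ (Icc a b) f)
    (ha : f a ≤ k + m * a) (hb : f b ≤ k + m * b) (hx : x ∈ Icc a b) : f x ≤ k + m * x := by
  have hab : a ≤ b := hx.1.trans hx.2
  rw [← segment_eq_Icc hab] at hx
  obtain ⟨s, t, hs, ht, hst, rfl⟩ := hx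
  calc f (s • a + t • b) ≤ s • f a + t • f b :=
        hf.2 (left_mem_Icc.2 hab) (right_mem_Icc.2 hab) hs ht hst
    _ ≤ s * (k + m * a) + t * (k + m * b) := by simp only [smul_eq_mul]; gcongr
    _ = k + m * (s • a + t • b) := by simp only [smul_eq_mul]; linear_combination k * hst

lemma concaveOn_ite_le_affine {φ : ℝ → ℝ} {a b c m : ℝ} (hφ : ConcaveOn ℝ (Icc a c) φ)
    (hle : ∀ x ∈ Icc a c, φ x ≤ φ c + m * (x - c)) :
    ConcaveOn ℝ (Icc a b) (fun x ↦ if x ≤ c then φ x else φ c + m * (x - c)) := by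
  refine concaveOn_of_slope_anti_adjacent (convex_Icc a b) fun {x y z} hx hz hxy hyz ↦ ?_
  have affine_slope : ∀ u v, u < v → (φ c + m * (v - c) - (φ c + m * (u - c))) / (v - u) = m :=
    fun u v huv ↦ by field_simp [(sub_pos.2 huv).ne']; ring
  rcases le_or_gt z c with hzc | hcz
  · simp only [hzc, hyz.le.trans hzc, hxy.le.trans (hyz.le.trans hzc), if_true]
    exact hφ.slope_anti_adjacent ⟨hx.1, by linarith⟩ ⟨by linarith [hx.1], hzc⟩ hxy hyz
  rcases le_or_gt y c with hyc | hcy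
  · simp only [hyc, hxy.le.trans hyc, not_le.2 hcz, if_true, if_false]
    set s := (φ y - φ x) / (y - x)
    have hsy : s * (y - x) = φ y - φ x := div_mul_cancel₀ _ (sub_pos.2 hxy).ne'
    have hcy : φ c ≤ φ y + s * (c - y) := by
      rcases hyc.eq_or_lt with rfl | hyc
      · simp
      have := hφ.slope_anti_adjacent ⟨hx.1, by linarith⟩ ⟨by linarith [hx.1], le_rfl⟩ hxy hyc
      rw [div_le_iff₀ (sub_pos.2 hyc)] at this
      linarith
    have hms : m ≤ s := by
      have := hle x ⟨hx.1, by linarith⟩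
      exact le_of_mul_le_mul_right (by linarith : m * (c - x) ≤ s * (c - x)) (by linarith)
    rw [div_le_iff₀ (sub_pos.2 hyz)]
    linarith [mul_le_mul_of_nonneg_right hms (sub_pos.2 hcz).le]
  simp only [not_le.2 hcz, not_le.2 hcy, if_false]
  rw [affine_slope y z hyz]
  split_ifs with hxc
  · rw [le_div_iff₀ (sub_pos.2 hxy)]
    linarith [hle x ⟨hx.1, hxc⟩]
  · rw [affine_slope x y hxy]

lemma binH_eq_binEntropy : binH = binEntropy :=
  binEntropy_eq_negMulLog_add_negMulLog_one_sub'.symm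

lemma continuous_fskew : Continuous fskew := by
  unfold fskew
  rw [binH_eq_binEntropy]
  fun_prop

noncomputable def fskewDeriv (η : ℝ) : ℝ :=
  (log (2 - η) - log η + log (1 + η) - log (1 - η)) / 2

lemma hasDerivAt_fskew {η : ℝ} (h0 : 0 < η) (h1 : η < 1) :
    HasDerivAt fskew (fskewDeriv η) η := by
  have hl := (hasDerivAt_binEntropy (p := η / 2) (by positivity) (by linarith)).comp η
    ((hasDerivAt_id' η).div_const 2)
  have hr := (hasDerivAt_binEntropy (p := (1 - η) / 2) (by linarith) (by linarith)).comp η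
    (((hasDerivAt_id' η).const_sub 1).div_const 2)
  rw [← binH_eq_binEntropy] at hl hr
  refine (hl.sub hr).congr_deriv ?_
  have half : ∀ x : ℝ, x ≠ 0 → log (x / 2) = log x - log 2 := fun x hx ↦ log_div hx two_ne_zero
  rw [fskewDeriv, show 1 - η / 2 = (2 - η) / 2 by ring, show 1 - (1 - η) / 2 = (1 + η) / 2 by ring,
    half η h0.ne', half (2 - η) (by linarith), half (1 - η) (by linarith),
    half (1 + η) (by linarith)]
  ring

noncomputable def fskewDeriv2 (η : ℝ) : ℝ :=
  (2 * η - 1) / (η * (2 - η) * (1 - η) * (1 + η))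

lemma hasDerivAt_fskewDeriv {η : ℝ} (h0 : 0 < η) (h1 : η < 1) :
    HasDerivAt fskewDeriv (fskewDeriv2 η) η := by
  have ha := ((hasDerivAt_id' η).const_sub 2).log (by linarith)
  have hb := (hasDerivAt_id' η).log h0.ne'
  have hc := ((hasDerivAt_id' η).const_add 1).log (by linarith)
  have hd := ((hasDerivAt_id' η).const_sub 1).log (by linarith)
  refine ((((ha.sub hb).add hc).sub hd).div_const 2).congr_deriv ?_
  have : 2 - η ≠ 0 := by linarith
  have : 1 - η ≠ 0 := by linarith
  have : 1 + η ≠ 0 := by linarith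
  rw [fskewDeriv2]
  field_simp
  ring

lemma fskewDeriv2_nonpos {η : ℝ} (h0 : 0 < η) (h1 : η ≤ 1 / 2) : fskewDeriv2 η ≤ 0 := by
  have : 0 < 2 - η := by linarith
  have : 0 < 1 - η := by linarith
  exact div_nonpos_of_nonpos_of_nonneg (by linarith) (by positivity)

lemma fskewDeriv2_nonneg {η : ℝ} (h0 : 1 / 2 ≤ η) (h1 : η < 1) : 0 ≤ fskewDeriv2 η := by
  have : 0 < η := by linarith
  have : 0 < 2 - η := by linarith
  have : 0 < 1 - η := by linarith
  exact div_nonneg (by linarith) (by positivity)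

lemma concaveOn_fskew : ConcaveOn ℝ (Icc 0 (1 / 2)) fskew := by
  refine concaveOn_of_hasDerivWithinAt2_nonpos (f' := fskewDeriv) (f'' := fskewDeriv2)
    (convex_Icc _ _) continuous_fskew.continuousOn (fun x hx ↦ ?_) (fun x hx ↦ ?_)
    (fun x hx ↦ ?_) <;> rw [interior_Icc] at hx
  · exact (hasDerivAt_fskew hx.1 (by linarith [hx.2])).hasDerivWithinAt
  · exact (hasDerivAt_fskewDeriv hx.1 (by linarith [hx.2])).hasDerivWithinAt
  · exact fskewDeriv2_nonpos hx.1 hx.2.le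

lemma convexOn_fskew : ConvexOn ℝ (Icc (1 / 2) 1) fskew := by
  refine convexOn_of_hasDerivWithinAt2_nonneg (f' := fskewDeriv) (f'' := fskewDeriv2)
    (convex_Icc _ _) continuous_fskew.continuousOn (fun x hx ↦ ?_) (fun x hx ↦ ?_)
    (fun x hx ↦ ?_) <;> rw [interior_Icc] at hx
  · exact (hasDerivAt_fskew (by linarith [hx.1]) hx.2).hasDerivWithinAt
  · exact (hasDerivAt_fskewDeriv (by linarith [hx.1]) hx.2).hasDerivWithinAt
  · exact fskewDeriv2_nonneg hx.1.le hx.2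

lemma fskewDeriv_one_fifth : fskewDeriv (1 / 5) = (log 2 - fskew (1 / 5)) / (4 / 5) := by
  simp only [fskewDeriv, fskew, binH, negMulLog]
  norm_num
  rw [show (9 / 5 : ℝ) = 3 ^ 2 / 5 by norm_num, show (6 / 5 : ℝ) = 2 * 3 / 5 by norm_num,
    show (4 / 5 : ℝ) = 2 ^ 2 / 5 by norm_num, show (1 / 10 : ℝ) = 1 / (2 * 5) by norm_num,
    show (9 / 10 : ℝ) = 3 ^ 2 / (2 * 5) by norm_num]
  simp only [one_div, log_inv, log_div, log_mul, log_pow, ne_eq, OfNat.ofNat_ne_zero,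
    not_false_eq_true, pow_eq_zero_iff, mul_eq_zero, or_self]
  push_cast
  ring

lemma fskew_one : fskew 1 = log 2 := by
  simp [fskew, binH_eq_binEntropy]

lemma fskew_le_chord {η : ℝ} (hη : η ∈ Icc (0 : ℝ) 1) :
    fskew η ≤ fskew (1 / 5) + (log 2 - fskew (1 / 5)) / (4 / 5) * (η - 1 / 5) := by
  rw [← fskewDeriv_one_fifth]
  have tangent : ∀ x ∈ Icc (0 : ℝ) (1 / 2),
      fskew x ≤ fskew (1 / 5) + fskewDeriv (1 / 5) * (x - 1 / 5) := fun x hx ↦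
    concaveOn_fskew.le_add_mul_sub_of_hasDerivAt (by norm_num) hx
      (hasDerivAt_fskew (by norm_num) (by norm_num))
  rcases le_total η (1 / 2) with h | h
  · exact tangent η ⟨hη.1, h⟩
  · have := convexOn_fskew.le_affine_of_le_of_le
      (k := fskew (1 / 5) - fskewDeriv (1 / 5) / 5) (m := fskewDeriv (1 / 5))
      (by linarith [tangent (1 / 2) (by norm_num)])
      (by rw [fskew_one, fskewDeriv_one_fifth]; linarith) ⟨h, hη.2⟩
    linarith

lemma gskew_eq_ite : gskew = fun η ↦ if η ≤ 1 / 5 then fskew η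
    else fskew (1 / 5) + (log 2 - fskew (1 / 5)) / (4 / 5) * (η - 1 / 5) := by
  ext η
  unfold gskew
  split_ifs
  · rfl
  · ring

/-- `g` is concave on `[0,1]` and dominates `f` there. -/
theorem stmt9 :
    ConcaveOn ℝ (Set.Icc (0 : ℝ) 1) gskew ∧
    (∀ η ∈ Set.Icc (0 : ℝ) 1, fskew η ≤ gskew η) := by
  rw [gskew_eq_ite]
  refine ⟨concaveOn_ite_le_affine (concaveOn_fskew.subset
      (Icc_subset_Icc le_rfl (by norm_num)) (convex_Icc _ _))
      fun x hx ↦ fskew_le_chord ⟨hx.1, hx.2.trans (by norm_num)⟩, fun η hη ↦ ?_⟩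
  dsimp only
  split_ifs
  · rfl
  · exact fskew_le_chord hη
end

section
/- Let U, V, X, Y1, Y2 be finitely-valued random variables on a probability space such that (Y1,Y2) is conditionally independent of (U,V) given X. Then I(U;Y1) + I(V;Y2) − I(U;V) ≤ I(X;Y1) + I(V;Y2) − I(V;Y1). -/
open MeasureTheory Real

/-!
After cancelling `I(V;Y₂)` the claim reads `I(U;Y₁) + I(V;Y₁) ≤ I(X;Y₁) + I(U;V)`; only the
marginal Markov chain `(U,V) → X → Y₁` matters. Along it `H(Y₁|X) = H(Y₁|U,V,X) ≤ H(Y₁|U,V)`,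
and submodularity `H(U,V,Y₁) + H(Y₁) ≤ H(U,Y₁) + H(V,Y₁)` finishes the argument. Both
inequalities are instances of `I(X;Y|Z) ≥ 0`, which is Gibbs' inequality
`∑ p log (r / p) ≤ ∑ r - ∑ p` against the law `r(x,y,z) = p(x,z) p(y,z) / p(z)`.
-/

section Distribution

variable {Ω : Type*} [MeasurableSpace Ω] (μ : Measure Ω) {A B : Type*}

lemma prob_nonneg (T : Ω → A) (a : A) : 0 ≤ prob μ T a := ENNReal.toReal_nonneg

lemma prob_congr {T : Ω → A} {S : Ω → B} {a : A} {b : B} (h : T ⁻¹' {a} = S ⁻¹' {b}) :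
    prob μ T a = prob μ S b := by
  rw [prob, prob, h]

lemma prob_comp_of_injective {T : Ω → A} {g : A → B} (hg : g.Injective) (a : A) :
    prob μ (fun ω => g (T ω)) (g a) = prob μ T a :=
  prob_congr μ (by ext ω; simp [hg.eq_iff])

lemma prob_le_prob_comp [IsFiniteMeasure μ] (T : Ω → A) (g : A → B) (a : A) :
    prob μ T a ≤ prob μ (fun ω => g (T ω)) (g a) :=
  measureReal_mono fun ω (h : T ω = a) => congrArg g h

lemma entropy_eq_neg_sum [Fintype A] (T : Ω → A) :
    entropy μ T = -∑ a, prob μ T a * log (prob μ T a) := by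
  simp [entropy, negMulLog]

variable [IsFiniteMeasure μ] [Fintype A] [MeasurableSpace A] [MeasurableSingletonClass A]
  {T : Ω → A}

lemma sum_prob_eq_measureReal_univ (hT : Measurable T) : ∑ a, prob μ T a = μ.real Set.univ := by
  rw [← Set.preimage_univ (f := T), ← Finset.coe_univ]
  exact sum_measureReal_preimage_singleton _ fun a _ => hT (measurableSet_singleton a)

lemma prob_comp_eq_sum [DecidableEq B] (hT : Measurable T) (g : A → B) (b : B) :
    prob μ (fun ω => g (T ω)) b = ∑ a with g a = b, prob μ T a := by
  have hfiber : (fun ω => g (T ω)) ⁻¹' {b} = T ⁻¹' ↑(Finset.univ.filter (g · = b)) := by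
    ext ω; simp
  rw [prob, hfiber]
  exact (sum_measureReal_preimage_singleton _ fun a _ => hT (measurableSet_singleton a)).symm

lemma entropy_comp_eq_neg_sum [Fintype B] (hT : Measurable T) (g : A → B) :
    entropy μ (fun ω => g (T ω))
      = -∑ a, prob μ T a * log (prob μ (fun ω => g (T ω)) (g a)) := by
  classical
  rw [← Finset.sum_fiberwise Finset.univ g, entropy]
  simp only [negMulLog, prob_comp_eq_sum μ hT, neg_mul, Finset.sum_mul, ← Finset.sum_neg_distrib]
  refine Finset.sum_congr rfl fun b _ => Finset.sum_congr rfl fun a ha => ?_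
  rw [(Finset.mem_filter.mp ha).2]

lemma entropy_comp_of_injective [Fintype B] (hT : Measurable T) {g : A → B} (hg : g.Injective) :
    entropy μ (fun ω => g (T ω)) = entropy μ T := by
  rw [entropy_comp_eq_neg_sum μ hT, entropy_eq_neg_sum μ T]
  simp only [prob_comp_of_injective μ hg]

variable [Fintype B] [MeasurableSpace B] [MeasurableSingletonClass B] {S : Ω → B}

lemma prob_eq_sum_prob_prodMk_right (hT : Measurable T) (hS : Measurable S) (a : A) :
    prob μ T a = ∑ b, prob μ (fun ω => (T ω, S ω)) (a, b) := by
  classical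
  have h := prob_comp_eq_sum μ (hT.prodMk hS) Prod.fst a
  rw [Finset.sum_filter, Fintype.sum_prod_type, Finset.sum_comm] at h
  simpa using h

lemma prob_eq_sum_prob_prodMk_left (hT : Measurable T) (hS : Measurable S) (b : B) :
    prob μ S b = ∑ a, prob μ (fun ω => (T ω, S ω)) (a, b) := by
  classical
  simpa [Finset.sum_filter, Fintype.sum_prod_type] using
    prob_comp_eq_sum μ (hT.prodMk hS) Prod.snd b

end Distribution

lemma mul_log_sub_log_le_sub {p q : ℝ} (hp : 0 < p) (hq : 0 < q) :
    p * (log q - log p) ≤ q - p := by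
  have h := log_le_sub_one_of_pos (div_pos hq hp)
  rw [log_div hq.ne' hp.ne'] at h
  calc p * (log q - log p) ≤ p * (q / p - 1) := by gcongr
    _ = q - p := by field_simp

section Information

variable {Ω : Type*} [MeasurableSpace Ω] (μ : Measure Ω) [IsFiniteMeasure μ]
  {A B C : Type*} [Fintype A] [MeasurableSpace A] [MeasurableSingletonClass A]
  [Fintype B] [MeasurableSpace B] [MeasurableSingletonClass B]
  [Fintype C] [MeasurableSpace C] [MeasurableSingletonClass C]
  {X : Ω → A} {Y : Ω → B} {Z : Ω → C}

lemma entropy_prodMk_comm (hX : Measurable X) (hY : Measurable Y) :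
    entropy μ (fun ω => (X ω, Y ω)) = entropy μ (fun ω => (Y ω, X ω)) := by
  simpa using entropy_comp_of_injective μ (hY.prodMk hX) Prod.swap_injective

lemma entropy_prodMk_assoc (hX : Measurable X) (hY : Measurable Y) (hZ : Measurable Z) :
    entropy μ (fun ω => ((X ω, Y ω), Z ω)) = entropy μ (fun ω => (X ω, Y ω, Z ω)) := by
  simpa using entropy_comp_of_injective μ (hX.prodMk (hY.prodMk hZ))
    (Equiv.prodAssoc A B C).symm.injective

theorem condMutualInfo_nonneg (hX : Measurable X) (hY : Measurable Y) (hZ : Measurable Z) :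
    0 ≤ condMutualInfo μ X Y Z := by
  set T := fun ω => (X ω, Y ω, Z ω)
  have hT : Measurable T := hX.prodMk (hY.prodMk hZ)
  set p := prob μ T
  set pXZ := prob μ (fun ω => (X ω, Z ω))
  set pYZ := prob μ (fun ω => (Y ω, Z ω))
  set pZ := prob μ Z
  have hHXZ : entropy μ (fun ω => (X ω, Z ω)) = -∑ t, p t * log (pXZ (t.1, t.2.2)) :=
    entropy_comp_eq_neg_sum μ hT (fun t => (t.1, t.2.2))
  have hHYZ : entropy μ (fun ω => (Y ω, Z ω)) = -∑ t, p t * log (pYZ t.2) :=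
    entropy_comp_eq_neg_sum μ hT (fun t => t.2)
  have hHZ : entropy μ Z = -∑ t, p t * log (pZ t.2.2) :=
    entropy_comp_eq_neg_sum μ hT (fun t => t.2.2)
  set r : A × B × C → ℝ := fun t => pXZ (t.1, t.2.2) * pYZ t.2 / pZ t.2.2
  have hterm : ∀ t, p t * (log (pXZ (t.1, t.2.2)) + log (pYZ t.2) - log (pZ t.2.2) - log (p t))
      ≤ r t - p t := by
    intro t
    rcases (prob_nonneg μ T t).eq_or_lt with h0 | hpos
    · rw [show p t = 0 from h0.symm, zero_mul, sub_zero]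
      exact div_nonneg (mul_nonneg (prob_nonneg μ _ _) (prob_nonneg μ _ _)) (prob_nonneg μ _ _)
    have hXZ := hpos.trans_le (prob_le_prob_comp μ T (fun t => (t.1, t.2.2)) t)
    have hYZ := hpos.trans_le (prob_le_prob_comp μ T (fun t => t.2) t)
    have hZ := hpos.trans_le (prob_le_prob_comp μ T (fun t => t.2.2) t)
    have hr : log (r t) = log (pXZ (t.1, t.2.2)) + log (pYZ t.2) - log (pZ t.2.2) := by
      rw [log_div (by positivity) hZ.ne', log_mul hXZ.ne' hYZ.ne']
    rw [← hr]
    exact mul_log_sub_log_le_sub hpos (by positivity)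
  have hXZ_marg : ∀ c, ∑ a, pXZ (a, c) = pZ c :=
    fun c => (prob_eq_sum_prob_prodMk_left μ hX hZ c).symm
  have hYZ_marg : ∀ c, ∑ b, pYZ (b, c) = pZ c :=
    fun c => (prob_eq_sum_prob_prodMk_left μ hY hZ c).symm
  have hsum_r : ∑ t, r t = ∑ t, p t :=
    calc ∑ t, r t = ∑ c, (∑ a, pXZ (a, c)) * (∑ b, pYZ (b, c)) / pZ c := by
          simp only [r, Fintype.sum_prod_type, Finset.sum_mul_sum, Finset.sum_div]
          exact (Finset.sum_congr rfl fun _ _ => Finset.sum_comm).trans Finset.sum_comm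
      _ = ∑ c, pZ c := by simp only [hXZ_marg, hYZ_marg, mul_self_div_self]
      _ = ∑ t, p t := by
          rw [sum_prob_eq_measureReal_univ μ hZ, sum_prob_eq_measureReal_univ μ hT]
  have hgibbs := Finset.sum_le_sum fun t (_ : t ∈ Finset.univ) => hterm t
  simp only [mul_add, mul_sub, Finset.sum_add_distrib, Finset.sum_sub_distrib] at hgibbs
  rw [condMutualInfo, hHXZ, hHYZ, hHZ, entropy_eq_neg_sum μ T]
  linarith

theorem CondIndepGiven.entropy_add_entropy (hX : Measurable X) (hY : Measurable Y)
    (hZ : Measurable Z) (h : CondIndepGiven μ X Y Z) :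
    entropy μ (fun ω => (X ω, Y ω, Z ω)) + entropy μ Y
      = entropy μ (fun ω => (X ω, Y ω)) + entropy μ (fun ω => (Y ω, Z ω)) := by
  set T := fun ω => (X ω, Y ω, Z ω)
  have hT : Measurable T := hX.prodMk (hY.prodMk hZ)
  set p := prob μ T
  set pXY := prob μ (fun ω => (X ω, Y ω))
  set pYZ := prob μ (fun ω => (Y ω, Z ω))
  set pY := prob μ Y
  have hHXY : entropy μ (fun ω => (X ω, Y ω)) = -∑ t, p t * log (pXY (t.1, t.2.1)) :=
    entropy_comp_eq_neg_sum μ hT (fun t => (t.1, t.2.1))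
  have hHYZ : entropy μ (fun ω => (Y ω, Z ω)) = -∑ t, p t * log (pYZ t.2) :=
    entropy_comp_eq_neg_sum μ hT (fun t => t.2)
  have hHY : entropy μ Y = -∑ t, p t * log (pY t.2.1) :=
    entropy_comp_eq_neg_sum μ hT (fun t => t.2.1)
  have hterm : ∀ t, p t * log (p t) + p t * log (pY t.2.1)
      = p t * log (pXY (t.1, t.2.1)) + p t * log (pYZ t.2) := by
    rintro ⟨a, b, c⟩
    rcases (prob_nonneg μ T (a, b, c)).eq_or_lt with h0 | hpos
    · simp [show p (a, b, c) = 0 from h0.symm]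
    have hXY := hpos.trans_le (prob_le_prob_comp μ T (fun t => (t.1, t.2.1)) (a, b, c))
    have hYZ := hpos.trans_le (prob_le_prob_comp μ T (fun t => t.2) (a, b, c))
    have hY := hpos.trans_le (prob_le_prob_comp μ T (fun t => t.2.1) (a, b, c))
    rw [← mul_add, ← mul_add, ← log_mul hpos.ne' hY.ne', ← log_mul hXY.ne' hYZ.ne', h a b c]
  rw [entropy_eq_neg_sum μ T, hHXY, hHYZ, hHY, ← neg_add, ← neg_add,
    ← Finset.sum_add_distrib, ← Finset.sum_add_distrib, Finset.sum_congr rfl fun t _ => hterm t]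

theorem CondIndepGiven.of_prodMk_right {D : Type*} [Fintype D] [MeasurableSpace D]
    [MeasurableSingletonClass D] {Z' : Ω → D} (hX : Measurable X) (hY : Measurable Y)
    (hZ : Measurable Z) (hZ' : Measurable Z') (h : CondIndepGiven μ X Y fun ω => (Z ω, Z' ω)) :
    CondIndepGiven μ X Y Z := by
  intro a b c
  have hXYZ : prob μ (fun ω => (X ω, Y ω, Z ω)) (a, b, c)
      = ∑ d, prob μ (fun ω => (X ω, Y ω, Z ω, Z' ω)) (a, b, c, d) := by
    rw [prob_eq_sum_prob_prodMk_right μ (hX.prodMk (hY.prodMk hZ)) hZ']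
    exact Finset.sum_congr rfl fun d _ => prob_congr μ (by ext ω; simp [and_assoc])
  have hYZ : prob μ (fun ω => (Y ω, Z ω)) (b, c)
      = ∑ d, prob μ (fun ω => (Y ω, Z ω, Z' ω)) (b, c, d) := by
    rw [prob_eq_sum_prob_prodMk_right μ (hY.prodMk hZ) hZ']
    exact Finset.sum_congr rfl fun d _ => prob_congr μ (by ext ω; simp [and_assoc])
  rw [hXYZ, hYZ, Finset.sum_mul, Finset.mul_sum]
  exact Finset.sum_congr rfl fun d _ => h a b (c, d)

end Information

/-- If `(U,V) → X → (Y₁,Y₂)` is a Markov chain, then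
`I(U;Y₁) + I(V;Y₂) − I(U;V) ≤ I(X;Y₁) + I(V;Y₂) − I(V;Y₁)`. -/
theorem stmt12 {Ω A B 𝒳 𝒴₁ 𝒴₂ : Type*} [MeasurableSpace Ω]
    (μ : Measure Ω) [IsProbabilityMeasure μ]
    [Fintype A] [MeasurableSpace A] [MeasurableSingletonClass A]
    [Fintype B] [MeasurableSpace B] [MeasurableSingletonClass B]
    [Fintype 𝒳] [MeasurableSpace 𝒳] [MeasurableSingletonClass 𝒳]
    [Fintype 𝒴₁] [MeasurableSpace 𝒴₁] [MeasurableSingletonClass 𝒴₁]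
    [Fintype 𝒴₂] [MeasurableSpace 𝒴₂] [MeasurableSingletonClass 𝒴₂]
    (U : Ω → A) (V : Ω → B) (X : Ω → 𝒳) (Y1 : Ω → 𝒴₁) (Y2 : Ω → 𝒴₂)
    (hU : Measurable U) (hV : Measurable V) (hX : Measurable X)
    (hY1 : Measurable Y1) (hY2 : Measurable Y2)
    (hMarkov : CondIndepGiven μ (fun ω => (U ω, V ω)) X (fun ω => (Y1 ω, Y2 ω))) :
    mutualInfo μ U Y1 + mutualInfo μ V Y2 - mutualInfo μ U V
      ≤ mutualInfo μ X Y1 + mutualInfo μ V Y2 - mutualInfo μ V Y1 := by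
  have hUV : Measurable fun ω => (U ω, V ω) := hU.prodMk hV
  have hchain := (hMarkov.of_prodMk_right μ hUV hX hY1 hY2).entropy_add_entropy μ hUV hX hY1
  have hX_Y1_given_UV := condMutualInfo_nonneg μ hX hY1 hUV
  have hU_V_given_Y1 := condMutualInfo_nonneg μ hU hV hY1
  rw [condMutualInfo, entropy_prodMk_comm μ hX hUV, entropy_prodMk_comm μ hY1 hUV,
    entropy_prodMk_assoc μ hU hV hY1, ← entropy_prodMk_assoc μ hX hY1 hUV,
    entropy_prodMk_comm μ (hX.prodMk hY1) hUV] at hX_Y1_given_UV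
  rw [condMutualInfo] at hU_V_given_Y1
  simp only [mutualInfo]
  linarith
end
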